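/- Elementary symmetric functions of the b-deformed Jucys–Murphy operators: Let k ≥ 1 and 0 ≤ r ≤ k. In the free ℤ[b]-module with basis 𝒫_k, Σ_{k ≥ i_1 > i_2 > ⋯ > i_r ≥ 1} 𝒥_{i_1} 𝒥_{i_2} ⋯ 𝒥_{i_r} (𝔢_k) = Σ_{λ ⊢ k, ℓ(λ) = k−r} 𝔭_λ, where the sum on the right is over partitions λ of k with exactly k−r parts. -/

import Mathlib

open scoped Classical
open MeasureTheory



/-- A pair partition of `{1, …, 2k}`, encoded as an involution of `ℕ` that
moves exactly the points `1, …, 2k`.  The pairs are the two-element sets `{a, f a}`. -/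
structure PairPartition (k : ℕ) where
  f : ℕ → ℕ
  invol : ∀ a, f (f a) = a
  moves : ∀ a, f a ≠ a ↔ (1 ≤ a ∧ a ≤ 2 * k)

namespace PairPartition

/-- The function underlying the identity (trivial) pair partition
`(1 2 | 3 4 | ⋯ | 2k-1 2k)`. -/
def trivFun (k : ℕ) (a : ℕ) : ℕ :=
  if 1 ≤ a ∧ a ≤ 2 * k then (if a % 2 = 1 then a + 1 else a - 1) else a

/-- The identity pair partition `𝔢_k = (1 2 | 3 4 | ⋯ | 2k-1 2k)`. -/
def triv (k : ℕ) : PairPartition k where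
  f := trivFun k
  invol := by intro a; unfold trivFun; split_ifs <;> omega
  moves := by intro a; unfold trivFun; split_ifs <;> omega

theorem ext' {k : ℕ} {m m' : PairPartition k} (h : m.f = m'.f) : m = m' := by
  cases m; cases m'; simpa using h

/-- The action of the transposition `(i j) ∈ S_{2k}` on pair partitions of `{1, …, 2k}`
(defined to do nothing if `i` or `j` lies outside `{1, …, 2k}`). -/
def swapAct {k : ℕ} (i j : ℕ) (m : PairPartition k) : PairPartition k :=
  if h : 1 ≤ i ∧ i ≤ 2 * k ∧ 1 ≤ j ∧ j ≤ 2 * k then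
    { f := fun a => Equiv.swap i j (m.f (Equiv.swap i j a))
      invol := by intro a; simp [m.invol]
      moves := by
        obtain ⟨hi1, hi2, hj1, hj2⟩ := h
        intro a
        have key : ∀ x y : ℕ, Equiv.swap i j x ≠ y ↔ x ≠ Equiv.swap i j y := by
          intro x y
          constructor
          · intro hxy hc; apply hxy; rw [hc]; simp
          · intro hxy hc; apply hxy; rw [← hc]; simp
        rw [key, ← Equiv.swap_apply_self i j a, Equiv.swap_apply_self i j a]
        rw [m.moves (Equiv.swap i j a)]
        rcases eq_or_ne a i with rfl | hai
        · rw [Equiv.swap_apply_left]; omega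
        rcases eq_or_ne a j with rfl | haj
        · rw [Equiv.swap_apply_right]; omega
        · rw [Equiv.swap_apply_of_ne_of_ne hai haj] }
  else m

/-- Removing the pair `{2k-1, 2k}` from a pair partition: the operation `𝔪 ↦ 𝔪↓`
(defined to return the trivial pair partition if `{2k-1, 2k} ∉ 𝔪`). -/
def down {k : ℕ} (m : PairPartition k) : PairPartition (k - 1) :=
  if h : m.f (2 * k - 1) = 2 * k then
    { f := fun a => if a = 2 * k - 1 ∨ a = 2 * k then a else m.f a
      invol := by
        intro a
        by_cases ha : a = 2 * k - 1 ∨ a = 2 * k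
        · simp [ha]
        · have h2k : m.f (2 * k) = 2 * k - 1 := by
            conv_lhs => rw [← h]
            exact m.invol _
          have hne1 : m.f a ≠ 2 * k - 1 := by
            intro hfa
            have h1 : m.f (m.f a) = m.f (2 * k - 1) := by rw [hfa]
            rw [m.invol, h] at h1
            exact ha (Or.inr h1)
          have hne2 : m.f a ≠ 2 * k := by
            intro hfa
            have h1 : m.f (m.f a) = m.f (2 * k) := by rw [hfa]
            rw [m.invol, h2k] at h1
            exact ha (Or.inl h1)
          simp only [if_neg ha, if_neg (not_or.mpr ⟨hne1, hne2⟩), m.invol]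
      moves := by
        intro a
        by_cases ha : a = 2 * k - 1 ∨ a = 2 * k
        · simp only [if_pos ha]
          rcases ha with ha | ha <;> subst ha <;> constructor <;> intro h' <;> first
            | exact absurd rfl h'
            | omega
        · push_neg at ha
          obtain ⟨ha1, ha2⟩ := ha
          simp only [if_neg (not_or.mpr ⟨ha1, ha2⟩)]
          rw [m.moves a]
          omega }
  else triv (k - 1)

/-- A pair partition as a permutation (involution) of `ℕ`. -/
def perm {k : ℕ} (m : PairPartition k) : Equiv.Perm ℕ :=
  Function.Involutive.toPerm m.f m.invol

end PairPartition

namespace PairPartition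

/-- The connected component (cycle) of the multigraph `Γ(𝔪)` containing a vertex `v`:
the orbit of `v` under the group generated by the involutions `𝔢_k` and `𝔪`. -/
def gammaOrbit {k : ℕ} (m : PairPartition k) (v : ℕ) : Set ℕ :=
  MulAction.orbit (Subgroup.closure {(triv k).perm, m.perm} : Subgroup (Equiv.Perm ℕ)) v

/-- The charge function of `Γ(𝔪)`: `charge m v` holds iff `v` receives charge `+`,
i.e. iff `v` is at even distance (in `Γ(𝔪)`) from the largest label of its cycle.
The vertices at even distance from the largest label `M` of a cycle are exactly the
orbit of `M` under the cyclic group generated by `𝔪 ∘ 𝔢_k`. -/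
def charge {k : ℕ} (m : PairPartition k) (v : ℕ) : Prop :=
  v ∈ MulAction.orbit (Subgroup.zpowers (m.perm * (triv k).perm) : Subgroup (Equiv.Perm ℕ))
        (sSup (gammaOrbit m v))

/-- The weight `ω^(b)(𝔪, (i j)·𝔪)` attached to the transposition `(i j)` acting on `𝔪`:
it is `1` if the charges of `i` and `j` in `Γ(𝔪)` agree, and `b` otherwise. -/
noncomputable def omegab {R : Type*} [CommRing R] (b : R) {k : ℕ}
    (m : PairPartition k) (i j : ℕ) : R :=
  if (charge m i ↔ charge m j) then 1 else b

/-- The number of cycles of `Γ(𝔪)` of length `2ℓ`, i.e. the multiplicity of `ℓ`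
in the coset-type `λ(𝔪)` of `𝔪`. -/
noncomputable def cycleCount {k : ℕ} (m : PairPartition k) (ℓ : ℕ) : ℕ :=
  (((Finset.Icc 1 (2 * k)).filter fun a => (gammaOrbit m a).ncard = 2 * ℓ).card) / (2 * ℓ)

/-- Two pair partitions have the same coset-type iff `Γ(𝔪)` and `Γ(𝔪')` have the same
number of cycles of every length. -/
def SameCosetType {k : ℕ} (m m' : PairPartition k) : Prop :=
  ∀ ℓ : ℕ, cycleCount m ℓ = cycleCount m' ℓ

/-- The pair partition `𝔪` has coset-type the multiset `μ` (a partition of `k`,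
presented as the multiset of its parts). -/
def HasCosetType {k : ℕ} (m : PairPartition k) (μ : Multiset ℕ) : Prop :=
  ∀ ℓ : ℕ, 1 ≤ ℓ → μ.count ℓ = cycleCount m ℓ

/-- All lists of length `n` with entries in the finset `S`. -/
def listsLen (S : Finset (ℕ × ℕ)) : ℕ → Finset (List (ℕ × ℕ))
  | 0 => {[]}
  | n + 1 => (S ×ˢ listsLen S n).image fun p => p.1 :: p.2

/-- Apply a sequence `τ = (τ_1, …, τ_r)` of transpositions (each encoded as a pair)
to a pair partition, the rightmost transposition acting first:
`τ_1 ∘ τ_2 ∘ ⋯ ∘ τ_r · 𝔪`. -/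
def applyFacts {k : ℕ} (l : List (ℕ × ℕ)) (m : PairPartition k) : PairPartition k :=
  l.foldr (fun t acc => swapAct t.1 t.2 acc) m

/-- `l` is a monotone factorisation of the pair partition `𝔪 ∈ 𝒫_k`: a sequence of
transpositions `(a_s b_s)` with `a_s < b_s`, all `b_s` odd, `b_1 ≤ b_2 ≤ ⋯ ≤ b_r`,
and `τ_1 ∘ ⋯ ∘ τ_r · 𝔪 = 𝔢_k`. -/
def IsMonoFact {k : ℕ} (m : PairPartition k) (l : List (ℕ × ℕ)) : Prop :=
  (∀ t ∈ l, 1 ≤ t.1 ∧ t.1 < t.2 ∧ t.2 ≤ 2 * k ∧ Odd t.2) ∧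
  List.Pairwise (· ≤ ·) (l.map Prod.snd) ∧
  applyFacts l m = triv k

/-- The hive number of a monotone factorisation: the number of distinct values among
`b_1, …, b_r`. -/
def hive (l : List (ℕ × ℕ)) : ℕ := (l.map Prod.snd).toFinset.card

/-- The flip number of a monotone factorisation `τ` of `𝔪`: the number of indices `s`
with `ω^(b)(𝔪^(s), τ_s · 𝔪^(s)) = b`, where `𝔪^(s) = τ_{s+1} ∘ ⋯ ∘ τ_r · 𝔪`. -/
noncomputable def flip {k : ℕ} (m : PairPartition k) : List (ℕ × ℕ) → ℕ
  | [] => 0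
  | t :: rest =>
      (if (charge (applyFacts rest m) t.1 ↔ charge (applyFacts rest m) t.2) then 0 else 1)
        + flip m rest

/-- The finset of monotone factorisations of `𝔪 ∈ 𝒫_k` of length `r`. -/
noncomputable def monoFinset {k : ℕ} (m : PairPartition k) (r : ℕ) : Finset (List (ℕ × ℕ)) :=
  (listsLen ((Finset.Icc 1 (2 * k)) ×ˢ (Finset.Icc 1 (2 * k))) r).filter fun l => IsMonoFact m l

/-- A sequence of transpositions is connected (relative to level `k`) if together with the
involution `ι = (1 2)(3 4)⋯(2k-1 2k)` it generates a subgroup acting transitively on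
`{1, …, 2k}`. -/
def IsConnectedFact (k : ℕ) (l : List (ℕ × ℕ)) : Prop :=
  ∀ a ∈ Finset.Icc 1 (2 * k), ∀ b ∈ Finset.Icc 1 (2 * k),
    ∃ σ ∈ Subgroup.closure
        ({(triv k).perm} ∪ {p : Equiv.Perm ℕ | ∃ t ∈ l, p = Equiv.swap t.1 t.2}),
      σ a = b

end PairPartition


noncomputable instance matrixMeasurableSpace {N : ℕ} :
    MeasurableSpace (Matrix (Fin N) (Fin N) ℝ) :=
  inferInstanceAs (MeasurableSpace (Fin N → Fin N → ℝ))

/-- The compact group `O(N)` of real orthogonal `N × N` matrices. -/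
abbrev OrthGroup (N : ℕ) := Matrix.orthogonalGroup (Fin N) ℝ

noncomputable instance orthMeasurableSpace {N : ℕ} : MeasurableSpace (OrthGroup N) :=
  borel _

/-- The diagonal matrix `I_{M,N}` whose first `M` diagonal entries are `1` and whose
remaining entries are `0`. -/
def IMN (N M : ℕ) : Matrix (Fin N) (Fin N) ℝ :=
  Matrix.diagonal fun p => if (p : ℕ) < M then (1 : ℝ) else 0

/-- The map `O ↦ O · I_{M,N} · Oᵀ` from `O(N)` onto the space `A(M,N)` of idempotent
real symmetric `N × N` matrices of rank `M`. -/
def grassMap (N M : ℕ) (O : OrthGroup N) : Matrix (Fin N) (Fin N) ℝ :=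
  (O : Matrix (Fin N) (Fin N) ℝ) * IMN N M * Matrix.transpose (O : Matrix (Fin N) (Fin N) ℝ)


/-- The product `A_{i(1)i(2)} A_{i(3)i(4)} ⋯ A_{i(2k-1)i(2k)}` of matrix entries. -/
def prodEntries {N : ℕ} (k : ℕ) (i : ℕ → Fin N) (A : Matrix (Fin N) (Fin N) ℝ) : ℝ :=
  ∏ a ∈ Finset.range k, A (i (2 * a + 1)) (i (2 * a + 2))



open PairPartition


/-- A step in the (`b`- or `bt`-) Weingarten graph: a type-A edge `𝔪 → (i 2k-1)·𝔪`,
a type-B edge `𝔪 → 𝔪↓`, or a type-C edge `𝔪 → ((i 2k-1)·𝔪)↓`. -/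
inductive WStep where
  | A (i : ℕ) : WStep
  | B : WStep
  | C (i : ℕ) : WStep
deriving DecidableEq

/-- `IsPathTo k 𝔪 ρ` holds iff `ρ` is a path in the `bt`-Weingarten graph from the
pair partition `𝔪 ∈ 𝒫_k` to the empty pair partition. -/
def IsPathTo : (k : ℕ) → PairPartition k → List WStep → Prop
  | 0, _, [] => True
  | _ + 1, _, [] => False
  | 0, _, _ :: _ => False
  | k + 1, m, WStep.A i :: ρ =>
      1 ≤ i ∧ i ≤ 2 * (k + 1) - 2 ∧ IsPathTo (k + 1) (swapAct i (2 * (k + 1) - 1) m) ρ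
  | k + 1, m, WStep.B :: ρ =>
      m.f (2 * (k + 1) - 1) = 2 * (k + 1) ∧ IsPathTo k (down m) ρ
  | k + 1, m, WStep.C i :: ρ =>
      1 ≤ i ∧ i ≤ 2 * (k + 1) - 2 ∧ m.f i = 2 * (k + 1) ∧
        IsPathTo k (down (swapAct i (2 * (k + 1) - 1) m)) ρ

/-- The product of the `b`-dependent edge weights along a path. -/
noncomputable def pathWeight {R : Type*} [CommRing R] (b : R) :
    (k : ℕ) → PairPartition k → List WStep → R
  | _, _, [] => 1
  | 0, _, _ :: _ => 1
  | k + 1, m, WStep.A i :: ρ =>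
      omegab b m i (2 * (k + 1) - 1) * pathWeight b (k + 1) (swapAct i (2 * (k + 1) - 1) m) ρ
  | k + 1, m, WStep.B :: ρ => pathWeight b k (down m) ρ
  | k + 1, m, WStep.C i :: ρ => pathWeight b k (down (swapAct i (2 * (k + 1) - 1) m)) ρ

/-- The number of type-A edges of a path. -/
def countA (l : List WStep) : ℕ :=
  (l.filter fun s => match s with | WStep.A _ => true | _ => false).length

/-- The number of type-B edges of a path. -/
def countB (l : List WStep) : ℕ :=
  (l.filter fun s => match s with | WStep.B => true | _ => false).length

/-- The number of type-C edges of a path. -/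
def countC (l : List WStep) : ℕ :=
  (l.filter fun s => match s with | WStep.C _ => true | _ => false).length

/-- The `b`-Weingarten function `Wg^(b)(𝔪) ∈ ℤ[b]⟦X⟧`: the coefficient of `X^n` is the
sum of `(-1)^{ℓ_A(ρ)} w(ρ)` over all paths `ρ` (with no type-C edges, i.e. paths in the
`b`-Weingarten graph) from `𝔪` to the empty pair partition with `ℓ_A(ρ) + ℓ_B(ρ) = n`.
Here `b` is the polynomial variable of `ℤ[b]`. -/
noncomputable def WgB (k : ℕ) (m : PairPartition k) : PowerSeries (Polynomial ℤ) :=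
  PowerSeries.mk fun n =>
    ∑ᶠ (ρ : List WStep)
      (_ : IsPathTo k m ρ ∧ (∀ i, WStep.C i ∉ ρ) ∧ countA ρ + countB ρ = n),
      (-1 : Polynomial ℤ) ^ countA ρ * pathWeight (Polynomial.X : Polynomial ℤ) k m ρ

/-- The `bt`-Weingarten function `Wg^(bt)(𝔪) ∈ (ℤ[b,y])⟦X⟧`: the coefficient of `X^n` is
the sum of `(-1)^{ℓ_A(ρ)} y^{ℓ_B(ρ)} w(ρ)` over all paths `ρ` in the `bt`-Weingarten graph
from `𝔪` to the empty pair partition with `ℓ_A(ρ) + ℓ_C(ρ) = n`.  Here `b = X 0` and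
`y = X 1` in `ℤ[b,y] = MvPolynomial (Fin 2) ℤ`. -/
noncomputable def WgBT (k : ℕ) (m : PairPartition k) :
    PowerSeries (MvPolynomial (Fin 2) ℤ) :=
  PowerSeries.mk fun n =>
    ∑ᶠ (ρ : List WStep) (_ : IsPathTo k m ρ ∧ countA ρ + countC ρ = n),
      (-1 : MvPolynomial (Fin 2) ℤ) ^ countA ρ * (MvPolynomial.X 1) ^ countB ρ *
        pathWeight (MvPolynomial.X 0 : MvPolynomial (Fin 2) ℤ) k m ρ

/-- The standard basis vector `𝔪` of the free module with basis `𝒫_k`,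
realised as functions `𝒫_k → R`. -/
noncomputable def basisVec {R : Type*} [CommRing R] (k : ℕ) (m : PairPartition k) :
    PairPartition k → R :=
  fun n => if n = m then 1 else 0

/-- The `b`-deformed Jucys–Murphy operator `𝒥_i` acting on the free module with basis
`𝒫_k` (realised as functions `𝒫_k → R`): on basis vectors,
`𝒥_i(𝔪) = ∑_{a=1}^{2i-2} ω^(b)((a 2i-1)·𝔪, 𝔪) · (a 2i-1)·𝔪`. -/
noncomputable def JbOp {R : Type*} [CommRing R] (b : R) {k : ℕ} (i : ℕ)
    (v : PairPartition k → R) : PairPartition k → R :=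
  fun n => ∑ a ∈ Finset.Icc 1 (2 * i - 2),
    omegab b n a (2 * i - 1) * v (swapAct a (2 * i - 1) n)

/-- The (odd) Jucys–Murphy element `J_{2i-1} = ∑_{a=1}^{2i-2} (a
 2i-1)` of the group
algebra of `S_{2k}`, acting on the free module with basis `𝒫_k` via the linear extension
of the `S_{2k}`-action on pair partitions. -/
noncomputable def JoddOp {R : Type*} [CommRing R] {k : ℕ} (i : ℕ)
    (v : PairPartition k → R) : PairPartition k → R :=
  fun n => ∑ a ∈ Finset.Icc 1 (2 * i - 2), v (swapAct a (2 * i - 1) n)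

/-- The vector `𝔭_μ = ∑_{𝔪 : λ(𝔪) = μ} 𝔪`, i.e. the indicator function of the set of
pair partitions of coset-type `μ`. -/
noncomputable def pVec {R : Type*} [CommRing R] (k : ℕ) (μ : Multiset ℕ) :
    PairPartition k → R :=
  fun m => if HasCosetType m μ then 1 else 0

noncomputable def applyPows {R : Type*} [CommRing R] (b : R) {k : ℕ} :
    List (ℕ × ℕ) → (PairPartition k → R) → (PairPartition k → R)
  | [], v => v
  | ia :: rest, v => (JbOp b ia.1)^[ia.2] (applyPows b rest v)


/-- The coefficient ring `ℤ[b,y]⟦X⟧`, with `b = X 0` and `y = X 1`. -/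
abbrev SeriesRing := PowerSeries (MvPolynomial (Fin 2) ℤ)

noncomputable def bS : SeriesRing := PowerSeries.C (MvPolynomial.X 0)
noncomputable def yS : SeriesRing := PowerSeries.C (MvPolynomial.X 1)

/-- The operator-valued power series `(1 + X·𝒥_i)⁻¹ = ∑_{j ≥ 0} (-X)^j 𝒥_i^j`
applied to a vector `v`, computed coefficientwise. -/
noncomputable def invApply (k : ℕ) (i : ℕ) (v : PairPartition k → SeriesRing) :
    PairPartition k → SeriesRing :=
  fun n => PowerSeries.mk fun d =>
    ∑ᶠ j : ℕ, PowerSeries.coeff d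
      ((-(PowerSeries.X : SeriesRing)) ^ j * ((JbOp bS i)^[j] v) n)

/-- The vector `(y + X𝒥_j)(1 + X𝒥_j)⁻¹ ⋯ (y + X𝒥_1)(1 + X𝒥_1)⁻¹ (𝔢_k)`. -/
noncomputable def prodVec (k : ℕ) : ℕ → (PairPartition k → SeriesRing)
  | 0 => fun n => if n = triv k then 1 else 0
  | j + 1 => fun n =>
      yS * invApply k (j + 1) (prodVec k j) n +
        PowerSeries.X * (JbOp bS (j + 1) (invApply k (j + 1) (prodVec k j))) n


open MvPolynomial

/-- The formal partial derivative `∂_n = ∂/∂p_n` on the polynomial ring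
`K[p_1, p_2, …]` (the variables being indexed by positive naturals);
junk value `0` for `n = 0`. -/
noncomputable def pd (K : Type*) [CommRing K] (n : ℕ) :
    MvPolynomial ℕ+ K →ₗ[K] MvPolynomial ℕ+ K :=
  if h : 0 < n then (pderiv (⟨n, h⟩ : ℕ+)).toLinearMap else 0

/-- The variable `p_n` of `K[p_1, p_2, …]`; junk value `0` for `n = 0`. -/
noncomputable def pvar (K : Type*) [CommRing K] (n : ℕ) : MvPolynomial ℕ+ K :=
  if h : 0 < n then X ⟨n, h⟩ else 0

section SumOp

variable (K : Type*) [CommRing K]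

lemma sumOp_support_subset (m : ℕ) (f : MvPolynomial ℕ+ K) :
    (Function.support fun i => ((i + m : ℕ) : K) • (pvar K i * pd K (i + m) f)) ⊆
      ((fun i => i + m) ⁻¹' ↑(f.vars.image (fun v : ℕ+ => (v : ℕ)))) := by
  intro i hi
  simp only [Function.mem_support] at hi
  by_contra hmem
  apply hi
  rcases Nat.eq_zero_or_pos (i + m) with h0 | h0
  · have hi0 : i = 0 := by omega
    subst hi0
    simp [pvar]
  · have hnot : (⟨i + m, h0⟩ : ℕ+) ∉ f.vars := by
      intro hv
      apply hmem
      simp only [Set.mem_preimage, Finset.coe_image, Set.mem_image, Finset.mem_coe]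
      exact ⟨⟨i + m, h0⟩, hv, rfl⟩
    have hz : pd K (i + m) f = 0 := by
      have hpd : pd K (i + m) = (pderiv (⟨i + m, h0⟩ : ℕ+)).toLinearMap := by
        unfold pd; exact dif_pos h0
      have := pderiv_eq_zero_of_notMem_vars (R := K) hnot
      rw [hpd]; exact this
    rw [hz, mul_zero, smul_zero]

lemma sumOp_support_finite (m : ℕ) (f : MvPolynomial ℕ+ K) :
    (Function.support fun i => ((i + m : ℕ) : K) • (pvar K i * pd K (i + m) f)).Finite := by
  apply Set.Finite.subset _ (sumOp_support_subset K m f)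
  apply Set.Finite.preimage
  · exact (add_left_injective m).injOn
  · exact (f.vars.image (fun v : ℕ+ => (v : ℕ))).finite_toSet

/-- The operator `∑_{i ≥ 1} (i+m) p_i ∂_{i+m}` on `K[p_1, p_2, …]`
(a well-defined linear operator, the sum being locally finite on polynomials). -/
noncomputable def sumOp (m : ℕ) : MvPolynomial ℕ+ K →ₗ[K] MvPolynomial ℕ+ K where
  toFun f := ∑ᶠ i : ℕ, ((i + m : ℕ) : K) • (pvar K i * pd K (i + m) f)
  map_add' x y := by
    have key : ∀ i : ℕ, ((i + m : ℕ) : K) • (pvar K i * pd K (i + m) (x + y)) =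
        ((i + m : ℕ) : K) • (pvar K i * pd K (i + m) x) +
          ((i + m : ℕ) : K) • (pvar K i * pd K (i + m) y) := by
      intro i
      rw [map_add, mul_add, smul_add]
    rw [finsum_congr key]
    exact finsum_add_distrib (sumOp_support_finite K m x) (sumOp_support_finite K m y)
  map_smul' c x := by
    have key : ∀ i : ℕ, ((i + m : ℕ) : K) • (pvar K i * pd K (i + m) (c • x)) =
        c • (((i + m : ℕ) : K) • (pvar K i * pd K (i + m) x)) := by
      intro i
      rw [_root_.map_smul, smul_comm]
      congr 1
      rw [mul_smul_comm]
    rw [finsum_congr key]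
    simp only [RingHom.id_apply]
    exact (smul_finsum' c (sumOp_support_finite K m x)).symm
end SumOp

/-- The `bt`-deformed Virasoro-type operator `L_m` of Theorem 3.5/4.7, acting on the
polynomial ring `K[p_1, p_2, …]`. -/
noncomputable def Lop (K : Type*) [CommRing K] (b t z hbar : K) (m : ℕ) :
    MvPolynomial ℕ+ K →ₗ[K] MvPolynomial ℕ+ K :=
  (((m : K) * Ring.inverse hbar) • pd K m)
    - (1 + b) • (∑ i ∈ Finset.Ioo 0 m,
        (((i : ℕ) : K) * (((m - i : ℕ)) : K)) • (pd K i ∘ₗ pd K (m - i)))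
    - sumOp K m
    - ((b * (m : K) * ((m - 1 : ℕ) : K)) • pd K m)
    - ((z * Ring.inverse hbar * (t - 1) * ((m - 1 : ℕ) : K)) • pd K (m - 1))
    - (if m = 1 then (z * Ring.inverse hbar * Ring.inverse hbar * Ring.inverse (1 + b)) •
        (LinearMap.id : MvPolynomial ℕ+ K →ₗ[K] MvPolynomial ℕ+ K) else 0)
open PairPartition

/-- `i : {1,…,2k} → {1,…,N}` is admissible for `𝔪`: `{a,b} ∈ 𝔪` implies `i a = i b`. -/
def Admissible {N : ℕ} (k : ℕ) (m : PairPartition k) (i : ℕ → Fin N) : Prop :=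
  ∀ a, 1 ≤ a → a ≤ 2 * k → i (m.f a) = i a

/-- `i : {1,…,2k} → {1,…,N}` is strongly admissible for `𝔪`:
for `a, b ∈ {1,…,2k}`, `i a = i b` holds iff `a = b` or `{a,b} ∈ 𝔪`. -/
def StronglyAdmissible {N : ℕ} (k : ℕ) (m : PairPartition k) (i : ℕ → Fin N) : Prop :=
  ∀ a b, 1 ≤ a → a ≤ 2 * k → 1 ≤ b → b ≤ 2 * k → (i a = i b ↔ (a = b ∨ m.f a = b))

/-- `ĥ^{(t)}_r(𝔪)` evaluated at a real number `t`: the weighted count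
`∑_{τ ∈ Mono(𝔪), ℓ(τ) = r} t^{hive(τ)}`. -/
noncomputable def hiveSum {k : ℕ} (m : PairPartition k) (r : ℕ) (t : ℝ) : ℝ :=
  ∑ l ∈ monoFinset m r, t ^ hive l

/-- The `bt`-monotone count `∑_{τ ∈ Mono(𝔪), ℓ(τ) = r} b^{flip(τ)} t^{hive(τ)}`
in `ℤ[b,t]`, with `b = X 0` and `t = X 1`. -/
noncomputable def btSum {k : ℕ} (m : PairPartition k) (r : ℕ) : MvPolynomial (Fin 2) ℤ :=
  ∑ l ∈ monoFinset m r,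
    (MvPolynomial.X 0 : MvPolynomial (Fin 2) ℤ) ^ (flip m l) *
      (MvPolynomial.X 1) ^ (hive l)

/-- The connected `bt`-monotone count
`∑_{τ ∈ CMono(𝔪), ℓ(τ) = r} b^{flip(τ)} t^{hive(τ)}` in `ℚ[b,t]`,
with `b = X 0` and `t = X 1`. -/
noncomputable def cMonoSum {k : ℕ} (m : PairPartition k) (r : ℕ) : MvPolynomial (Fin 2) ℚ :=
  ∑ l ∈ (monoFinset m r).filter (fun l => IsConnectedFact k l),
    (MvPolynomial.X 0 : MvPolynomial (Fin 2) ℚ) ^ (flip m l) *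
      (MvPolynomial.X 1) ^ (hive l)

/-- The operator `c + J_{2i-1}` on the free module with basis `𝒫_k`. -/
noncomputable def affJoddOp {k : ℕ} (c : ℝ) (i : ℕ) (v : PairPartition k → ℝ) :
    PairPartition k → ℝ :=
  fun n => c * v n + JoddOp i v n

/-!
By induction on `k`. Split the `r`-subsets of `{1, …, k+1}` according to whether they contain
`k+1`. For `i ≤ k` the operator `𝒥_i` commutes with adjoining the pair `{2k+1, 2k+2}` to a
pair partition of `{1, …, 2k}`, since this changes neither the cycles through `1, …, 2k` nor their
charges; so the subsets avoiding `k+1` contribute the value of `e_r(𝒥_1, …, 𝒥_k) 𝔢_k` at `𝔪↓`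
when `{2k+1, 2k+2} ∈ 𝔪`, and removing this 2-cycle deletes a part `1` from the coset-type.
On such vectors `𝒥_{k+1}` has a single contributing transposition, `(a 2k+1)` with `a = 𝔪(2k+2)`,
of weight `1`; so the subsets containing `k+1` contribute the value of `e_{r-1}(𝒥_1, …, 𝒥_k) 𝔢_k`
at `((a 2k+1)·𝔪)↓`, whose coset-type arises from that of `𝔪` by lowering one part `ℓ+1` to `ℓ`.
In both cases the number of parts changes exactly as `k - r` does.
-/

section PermOrbit

open MulAction
open scoped Pointwise

variable {α : Type*} {S S' : Set (Equiv.Perm α)} {A : Set α}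

lemma Equiv.Perm.mapsTo_of_mem_closure (hA : A.Finite) (hS : ∀ σ ∈ S, Set.MapsTo σ A A)
    {g : Equiv.Perm α} (hg : g ∈ Subgroup.closure S) : Set.MapsTo g A A := by
  have hle : Subgroup.closure S ≤ stabilizer (Equiv.Perm α) A :=
    (Subgroup.closure_le _).mpr fun σ hσ => (mem_stabilizer_set' hA).mpr (hS σ hσ)
  exact (mem_stabilizer_set' hA).mp (hle hg)

lemma Equiv.Perm.orbit_closure_subset (hA : A.Finite) (hS : ∀ σ ∈ S, Set.MapsTo σ A A)
    {v : α} (hv : v ∈ A) : orbit (Subgroup.closure S) v ⊆ A := by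
  rintro _ ⟨g, rfl⟩
  exact Equiv.Perm.mapsTo_of_mem_closure hA hS g.2 hv

lemma Equiv.Perm.mapsTo_orbit {H : Subgroup (Equiv.Perm α)} {g : Equiv.Perm α} (hg : g ∈ H)
    (v : α) : Set.MapsTo g (orbit H v) (orbit H v) := by
  rintro _ ⟨h, rfl⟩
  exact ⟨⟨g, hg⟩ * h, mul_smul _ _ _⟩

lemma Equiv.Perm.orbit_closure_subset_of_eqOn (hA : A.Finite)
    (hS' : ∀ σ ∈ S', Set.MapsTo σ A A) (hS : ∀ σ ∈ S, ∃ σ' ∈ S', Set.EqOn σ σ' A)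
    {v : α} (hv : v ∈ A) : orbit (Subgroup.closure S) v ⊆ orbit (Subgroup.closure S') v := by
  have hB : orbit (Subgroup.closure S') v ⊆ A := Equiv.Perm.orbit_closure_subset hA hS' hv
  refine Equiv.Perm.orbit_closure_subset (hA.subset hB) (fun σ hσ x hx => ?_) (mem_orbit_self v)
  obtain ⟨σ', hσ', heq⟩ := hS σ hσ
  rw [heq (hB hx)]
  exact Equiv.Perm.mapsTo_orbit (Subgroup.subset_closure hσ') v hx

lemma Equiv.Perm.orbit_closure_pair_eq_of_eqOn {σ τ σ' τ' : Equiv.Perm α} (hA : A.Finite)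
    (hσ' : Set.MapsTo σ' A A) (hτ' : Set.MapsTo τ' A A) (hσ : Set.EqOn σ σ' A)
    (hτ : Set.EqOn τ τ' A) {v : α} (hv : v ∈ A) :
    orbit (Subgroup.closure {σ, τ}) v = orbit (Subgroup.closure {σ', τ'}) v := by
  apply subset_antisymm
  · refine Equiv.Perm.orbit_closure_subset_of_eqOn hA ?_ ?_ hv
    · rintro _ (rfl | rfl)
      exacts [hσ', hτ']
    · rintro _ (rfl | rfl)
      exacts [⟨σ', by simp, hσ⟩, ⟨τ', by simp, hτ⟩]
  · refine Equiv.Perm.orbit_closure_subset_of_eqOn hA ?_ ?_ hv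
    · rintro _ (rfl | rfl)
      exacts [hσ.mapsTo_iff.mpr hσ', hτ.mapsTo_iff.mpr hτ']
    · rintro _ (rfl | rfl)
      exacts [⟨σ, by simp, hσ.symm⟩, ⟨τ, by simp, hτ.symm⟩]

end PermOrbit

lemma Finset.even_card_of_involution {α : Type*} {s : Finset α} {f : α → α}
    (hmaps : ∀ x ∈ s, f x ∈ s) (hinv : ∀ x ∈ s, f (f x) = x) (hfix : ∀ x ∈ s, f x ≠ x) :
    Even s.card := by
  induction s using Finset.strongInduction with
  | H s ih =>
    rcases s.eq_empty_or_nonempty with rfl | ⟨x, hx⟩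
    · simp
    set t := (s.erase x).erase (f x)
    have hfx : f x ∈ s.erase x := Finset.mem_erase.mpr ⟨hfix x hx, hmaps x hx⟩
    have hmem : ∀ y ∈ t, y ∈ s ∧ y ≠ x ∧ y ≠ f x := fun y hy => by
      simp only [t, Finset.mem_erase] at hy; exact ⟨hy.2.2, hy.2.1, hy.1⟩
    have ht : Even t.card := by
      refine ih t ((Finset.erase_ssubset hfx).trans (Finset.erase_ssubset hx)) ?_ ?_ ?_
      · intro y hy
        obtain ⟨hys, hyx, hyfx⟩ := hmem y hy
        simp only [t, Finset.mem_erase]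
        refine ⟨fun h => hyx ?_, fun h => hyfx ?_, hmaps y hys⟩
        · rw [← hinv y hys, h, hinv x hx]
        · rw [← hinv y hys, h]
      · exact fun y hy => hinv y (hmem y hy).1
      · exact fun y hy => hfix y (hmem y hy).1
    have hpos : 0 < (s.erase x).card := Finset.card_pos.mpr ⟨f x, hfx⟩
    rw [Finset.card_erase_of_mem hfx, Finset.card_erase_of_mem hx] at ht
    rw [Finset.card_erase_of_mem hx] at hpos
    obtain ⟨n, hn⟩ := ht
    exact ⟨n + 1, by omega⟩

lemma Finset.card_filter_eq_ite_of_forall {α : Type*} {s : Finset α} {g : α → ℕ} {c : ℕ}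
    (h : ∀ x ∈ s, g x = c) (n : ℕ) :
    (s.filter fun x => g x = n).card = if c = n then s.card else 0 := by
  split_ifs with hc
  · rw [Finset.filter_true_of_mem fun x hx => (h x hx).trans hc]
  · rw [Finset.filter_false_of_mem fun x hx => (h x hx).symm ▸ hc, Finset.card_empty]

lemma Finset.sort_insert_of_forall_lt {α : Type*} [LinearOrder α] {s : Finset α} {a : α}
    (h : ∀ x ∈ s, x < a) : (insert a s).sort (· ≤ ·) = s.sort (· ≤ ·) ++ [a] := by
  have ha : a ∉ s := fun ha => lt_irrefl a (h a ha)
  refine List.Perm.eq_of_pairwise' (Finset.pairwise_sort _ _) ?_ ?_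
  · refine List.pairwise_append.mpr ⟨Finset.pairwise_sort _ _, List.pairwise_singleton _ _, ?_⟩
    intro x hx y hy
    rw [List.mem_singleton.mp hy]
    exact (h x ((Finset.mem_sort _).mp hx)).le
  · rw [← Multiset.coe_eq_coe, ← Multiset.coe_add, Finset.sort_eq, Finset.sort_eq,
      Finset.insert_val_of_notMem ha, Multiset.coe_singleton, ← Multiset.singleton_add, add_comm]

lemma Nat.Partition.card_parts_le {n : ℕ} (p : n.Partition) : p.parts.card ≤ n := by
  simpa [p.parts_sum] using Multiset.card_nsmul_le_sum (s := p.parts) (a := 1)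
    fun _ hx => p.parts_pos hx

lemma Nat.Partition.exists_iff_exists_cons {N n a : ℕ} (hN : n + a = N) (ha : 1 ≤ a)
    {P : Multiset ℕ → Prop} (hP : ∀ μ, P μ → a ∈ μ) :
    (∃ p : N.Partition, P p.parts) ↔ ∃ q : n.Partition, P (a ::ₘ q.parts) := by
  subst hN
  constructor
  · rintro ⟨p, hp⟩
    have hcons := Multiset.cons_erase (hP _ hp)
    refine ⟨⟨p.parts.erase a, fun hi => p.parts_pos (Multiset.mem_of_mem_erase hi), ?_⟩,
      hcons ▸ hp⟩
    have := p.parts_sum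
    rw [← hcons, Multiset.sum_cons] at this
    omega
  · rintro ⟨q, hq⟩
    refine ⟨⟨a ::ₘ q.parts, fun hi => ?_, by rw [Multiset.sum_cons, q.parts_sum, add_comm]⟩, hq⟩
    rcases Multiset.mem_cons.mp hi with rfl | hi
    exacts [ha, q.parts_pos hi]

namespace PairPartition

open MulAction

variable {k : ℕ}

lemma involutive (m : PairPartition k) : Function.Involutive m.f := m.invol

lemma f_ne (m : PairPartition k) {a : ℕ} (ha : a ∈ Set.Icc 1 (2 * k)) : m.f a ≠ a :=
  (m.moves a).mpr ha

lemma f_eq_self (m : PairPartition k) {a : ℕ} (ha : a ∉ Set.Icc 1 (2 * k)) : m.f a = a :=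
  not_not.mp (mt (m.moves a).mp ha)

lemma f_mem_Icc (m : PairPartition k) {a : ℕ} (ha : a ∈ Set.Icc 1 (2 * k)) :
    m.f a ∈ Set.Icc 1 (2 * k) :=
  (m.moves _).mp (by rw [m.invol]; exact (m.f_ne ha).symm)

lemma mapsTo_perm (m : PairPartition k) :
    Set.MapsTo m.perm (Set.Icc 1 (2 * k)) (Set.Icc 1 (2 * k)) :=
  fun _ => m.f_mem_Icc

@[simp] lemma perm_apply (m : PairPartition k) (x : ℕ) : m.perm x = m.f x := rfl

lemma triv_f_sub_one (hk : 1 ≤ k) : (triv k).f (2 * k - 1) = 2 * k := by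
  simp only [triv, trivFun]; split_ifs <;> omega

lemma triv_f_two_mul (hk : 1 ≤ k) : (triv k).f (2 * k) = 2 * k - 1 := by
  simp only [triv, trivFun]; split_ifs <;> omega

lemma triv_succ_f {x : ℕ} (hx : x ≤ 2 * k) : (triv (k + 1)).f x = (triv k).f x := by
  simp only [triv, trivFun]; split_ifs <;> omega

lemma swapAct_f_apply {i j : ℕ} (hi : i ∈ Set.Icc 1 (2 * k)) (hj : j ∈ Set.Icc 1 (2 * k))
    (m : PairPartition k) (x : ℕ) :
    (swapAct i j m).f x = Equiv.swap i j (m.f (Equiv.swap i j x)) := by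
  rw [swapAct, dif_pos ⟨hi.1, hi.2, hj.1, hj.2⟩]

lemma down_f_apply {m : PairPartition (k + 1)} (h : m.f (2 * (k + 1) - 1) = 2 * (k + 1))
    (x : ℕ) : (down m).f x = if x = 2 * (k + 1) - 1 ∨ x = 2 * (k + 1) then x else m.f x := by
  rw [down, dif_pos h]

lemma down_f_of_le {m : PairPartition (k + 1)} (h : m.f (2 * (k + 1) - 1) = 2 * (k + 1))
    {x : ℕ} (hx : x ≤ 2 * k) : (down m).f x = m.f x := by
  rw [down_f_apply h, if_neg (by omega)]

lemma down_triv : down (triv (k + 1)) = triv k := by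
  refine ext' (funext fun x => ?_)
  rw [down_f_apply (triv_f_sub_one (by omega))]
  simp only [triv, trivFun]
  split_ifs <;> omega

lemma eq_triv_succ_iff {m : PairPartition (k + 1)} :
    m = triv (k + 1) ↔ m.f (2 * (k + 1) - 1) = 2 * (k + 1) ∧ down m = triv k := by
  refine ⟨fun h => h ▸ ⟨triv_f_sub_one (by omega), down_triv⟩, fun ⟨h, hd⟩ => ?_⟩
  refine ext' (funext fun x => ?_)
  have hx := congrFun (congrArg PairPartition.f hd) x
  rw [down_f_apply h] at hx
  by_cases hx1 : x = 2 * (k + 1) - 1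
  · rw [hx1, h, triv_f_sub_one (by omega)]
  by_cases hx2 : x = 2 * (k + 1)
  · rw [hx2, m.involutive.eq_iff.mpr h.symm, triv_f_two_mul (by omega)]
  rw [if_neg (by omega)] at hx
  rw [hx]
  simp only [triv, trivFun]
  split_ifs <;> omega

lemma not_pair_iff {m : PairPartition (k + 1)} :
    ¬ m.f (2 * (k + 1) - 1) = 2 * (k + 1) ↔ m.f (2 * (k + 1)) ≤ 2 * k := by
  obtain ⟨-, h1⟩ := m.f_mem_Icc (a := 2 * (k + 1)) ⟨by omega, le_rfl⟩
  have h2 := m.f_ne (a := 2 * (k + 1)) ⟨by omega, le_rfl⟩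
  rw [m.involutive.eq_iff]
  omega

lemma swapAct_f_top_sub_one {m : PairPartition (k + 1)} {a j : ℕ}
    (ha : a ∈ Set.Icc 1 (2 * k)) (hj : j ∈ Set.Icc 1 (2 * k)) :
    (swapAct a j m).f (2 * (k + 1) - 1) = 2 * (k + 1) ↔ m.f (2 * (k + 1) - 1) = 2 * (k + 1) := by
  have hI : Set.Icc 1 (2 * k) ⊆ Set.Icc 1 (2 * (k + 1)) := Set.Icc_subset_Icc_right (by omega)
  rw [swapAct_f_apply (hI ha) (hI hj), Equiv.swap_apply_eq_iff,
    Equiv.swap_apply_of_ne_of_ne (by have := ha.2; omega) (by have := hj.2; omega),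
    Equiv.swap_apply_of_ne_of_ne (by have := ha.2; omega) (by have := hj.2; omega)]

lemma down_swapAct {m : PairPartition (k + 1)} (h : m.f (2 * (k + 1) - 1) = 2 * (k + 1))
    {a j : ℕ} (ha : a ∈ Set.Icc 1 (2 * k)) (hj : j ∈ Set.Icc 1 (2 * k)) :
    down (swapAct a j m) = swapAct a j (down m) := by
  have hI : Set.Icc 1 (2 * k) ⊆ Set.Icc 1 (2 * (k + 1)) := Set.Icc_subset_Icc_right (by omega)
  refine ext' (funext fun x => ?_)
  have hswap : ∀ y, Equiv.swap a j y = 2 * (k + 1) - 1 ∨ Equiv.swap a j y = 2 * (k + 1) ↔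
      y = 2 * (k + 1) - 1 ∨ y = 2 * (k + 1) := fun y => by
    rw [Equiv.swap_apply_eq_iff, Equiv.swap_apply_eq_iff,
      Equiv.swap_apply_of_ne_of_ne (by have := ha.2; omega) (by have := hj.2; omega),
      Equiv.swap_apply_of_ne_of_ne (by have := ha.2; omega) (by have := hj.2; omega)]
  rw [down_f_apply ((swapAct_f_top_sub_one ha hj).mpr h), swapAct_f_apply (hI ha) (hI hj),
    swapAct_f_apply (m := down m) ha hj, down_f_apply h, if_congr (hswap x) rfl rfl]
  split_ifs
  · exact (Equiv.swap_apply_self _ _ _).symm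
  · rfl

lemma gammaOrbit_subset (m : PairPartition k) {v : ℕ} (hv : v ∈ Set.Icc 1 (2 * k)) :
    gammaOrbit m v ⊆ Set.Icc 1 (2 * k) := by
  refine Equiv.Perm.orbit_closure_subset (Set.finite_Icc _ _) ?_ hv
  rintro _ (rfl | rfl)
  exacts [(triv k).mapsTo_perm, m.mapsTo_perm]

lemma mem_gammaOrbit_self (m : PairPartition k) (v : ℕ) : v ∈ gammaOrbit m v :=
  mem_orbit_self v

lemma gammaOrbit_eq_of_mem {m : PairPartition k} {v x : ℕ} (h : x ∈ gammaOrbit m v) :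
    gammaOrbit m x = gammaOrbit m v :=
  orbit_eq_iff.mpr h

lemma mapsTo_triv_gammaOrbit (m : PairPartition k) (v : ℕ) :
    Set.MapsTo (triv k).f (gammaOrbit m v) (gammaOrbit m v) :=
  Equiv.Perm.mapsTo_orbit (Subgroup.subset_closure (Set.mem_insert _ _)) v

lemma mapsTo_gammaOrbit (m : PairPartition k) (v : ℕ) :
    Set.MapsTo m.f (gammaOrbit m v) (gammaOrbit m v) :=
  Equiv.Perm.mapsTo_orbit
    (Subgroup.subset_closure (Set.mem_insert_of_mem _ (Set.mem_singleton _))) v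

lemma f_mem_gammaOrbit (m : PairPartition k) (v : ℕ) : m.f v ∈ gammaOrbit m v :=
  m.mapsTo_gammaOrbit v (m.mem_gammaOrbit_self v)

lemma triv_f_mem_gammaOrbit (m : PairPartition k) (v : ℕ) : (triv k).f v ∈ gammaOrbit m v :=
  m.mapsTo_triv_gammaOrbit v (m.mem_gammaOrbit_self v)

lemma f_triv_f_f_mem_gammaOrbit (m : PairPartition k) (y : ℕ) :
    m.f ((triv k).f (m.f y)) ∈ gammaOrbit m y :=
  m.mapsTo_gammaOrbit y (m.mapsTo_triv_gammaOrbit y (m.f_mem_gammaOrbit y))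

lemma even_ncard_gammaOrbit (m : PairPartition k) {v : ℕ} (hv : v ∈ Set.Icc 1 (2 * k)) :
    Even (gammaOrbit m v).ncard := by
  have hfin := (Set.finite_Icc 1 (2 * k)).subset (m.gammaOrbit_subset hv)
  rw [Set.ncard_eq_toFinset_card _ hfin]
  refine Finset.even_card_of_involution (f := (triv k).f) (fun x hx => ?_)
    (fun x _ => (triv k).invol x) (fun x hx => (triv k).f_ne ?_)
  · simpa using m.mapsTo_triv_gammaOrbit v (by simpa using hx)
  · exact m.gammaOrbit_subset hv (by simpa using hx)

lemma charge_f_triv_f (m : PairPartition k) (x : ℕ) :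
    charge m (m.f ((triv k).f x)) ↔ charge m x := by
  have hΓ : gammaOrbit m (m.f ((triv k).f x)) = gammaOrbit m x :=
    gammaOrbit_eq_of_mem (m.mapsTo_gammaOrbit x (m.triv_f_mem_gammaOrbit x))
  have hZ : m.f ((triv k).f x) ∈ orbit (Subgroup.zpowers (m.perm * (triv k).perm)) x :=
    ⟨⟨_, Subgroup.mem_zpowers _⟩, rfl⟩
  rw [charge, charge, hΓ, ← orbit_eq_iff, ← orbit_eq_iff, orbit_eq_iff.mpr hZ]

lemma omegab_f_triv_f {R : Type*} [CommRing R] (b : R) (m : PairPartition k) (x : ℕ) :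
    omegab b m (m.f ((triv k).f x)) x = 1 :=
  if_pos (m.charge_f_triv_f x)

lemma card_filter_gammaOrbit_succ (m : PairPartition (k + 1)) (n : ℕ) :
    ((Finset.Icc 1 (2 * (k + 1))).filter fun a => (gammaOrbit m a).ncard = n).card =
      ((Finset.Icc 1 (2 * k)).filter fun a => (gammaOrbit m a).ncard = n).card +
      (({2 * (k + 1) - 1, 2 * (k + 1)} : Finset ℕ).filter
        fun a => (gammaOrbit m a).ncard = n).card := by
  have hsplit : Finset.Icc 1 (2 * (k + 1)) =
      Finset.Icc 1 (2 * k) ∪ {2 * (k + 1) - 1, 2 * (k + 1)} := by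
    ext x; simp only [Finset.mem_Icc, Finset.mem_union, Finset.mem_insert,
      Finset.mem_singleton]; omega
  have hdisj : Disjoint (Finset.Icc 1 (2 * k)) {2 * (k + 1) - 1, 2 * (k + 1)} := by
    simp only [Finset.disjoint_insert_right, Finset.mem_Icc, Finset.disjoint_singleton_right]
    omega
  rw [hsplit, Finset.filter_union,
    Finset.card_union_of_disjoint (Finset.disjoint_filter_filter hdisj)]

lemma eq_of_hasCosetType {m : PairPartition k} {p q : k.Partition}
    (hp : HasCosetType m p.parts) (hq : HasCosetType m q.parts) : p = q := by
  refine Nat.Partition.ext (Multiset.ext.mpr fun ℓ => ?_)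
  rcases Nat.eq_zero_or_pos ℓ with rfl | hℓ
  · rw [Multiset.count_eq_zero_of_notMem fun h => (p.parts_pos h).ne rfl,
      Multiset.count_eq_zero_of_notMem fun h => (q.parts_pos h).ne rfl]
  · rw [hp ℓ hℓ, hq ℓ hℓ]

lemma sum_pVec_apply {R : Type*} [CommRing R] (K : ℕ) (m : PairPartition k) :
    (∑ p ∈ Finset.univ.filter (fun p : k.Partition => p.parts.card = K),
      (pVec k p.parts : PairPartition k → R)) m =
      if ∃ p : k.Partition, p.parts.card = K ∧ HasCosetType m p.parts then 1 else 0 := by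
  rw [Finset.sum_apply]
  split_ifs with hex
  · obtain ⟨p₀, hp₀K, hp₀⟩ := hex
    rw [Finset.sum_eq_single p₀]
    · exact if_pos hp₀
    · exact fun q _ hne => if_neg fun hq => hne (eq_of_hasCosetType hq hp₀)
    · exact fun h => absurd (by simpa using hp₀K) h
  · exact Finset.sum_eq_zero fun q hq => if_neg fun hq' => hex ⟨q, by simpa using hq, hq'⟩

section Down

variable {m : PairPartition (k + 1)} (h : m.f (2 * (k + 1) - 1) = 2 * (k + 1))
include h

lemma gammaOrbit_down {x : ℕ} (hx : x ∈ Set.Icc 1 (2 * k)) :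
    gammaOrbit m x = gammaOrbit (down m) x :=
  Equiv.Perm.orbit_closure_pair_eq_of_eqOn (Set.finite_Icc _ _) (triv k).mapsTo_perm
    (down m).mapsTo_perm (fun _ hy => triv_succ_f hy.2) (fun _ hy => (down_f_of_le h hy.2).symm) hx

lemma charge_down {x : ℕ} (hx : x ∈ Set.Icc 1 (2 * k)) : charge m x ↔ charge (down m) x := by
  have hΓ := gammaOrbit_down h hx
  have hM : sSup (gammaOrbit m x) ∈ Set.Icc 1 (2 * k) := by
    have hfin := (Set.finite_Icc 1 (2 * k)).subset ((down m).gammaOrbit_subset hx)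
    rw [hΓ]
    exact (down m).gammaOrbit_subset hx (Set.Nonempty.csSup_mem ⟨x, mem_orbit_self x⟩ hfin)
  have hrot : Set.EqOn ⇑(m.perm * (triv (k + 1)).perm) ⇑((down m).perm * (triv k).perm)
      (Set.Icc 1 (2 * k)) := fun y hy => by
    simp only [Equiv.Perm.mul_apply, perm_apply, triv_succ_f hy.2,
      down_f_of_le h ((triv k).f_mem_Icc hy).2]
  have hrot' := (down m).mapsTo_perm.comp (triv k).mapsTo_perm
  rw [charge, charge, ← hΓ, Subgroup.zpowers_eq_closure, Subgroup.zpowers_eq_closure,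
    ← Set.pair_eq_singleton, ← Set.pair_eq_singleton ((down m).perm * _),
    Equiv.Perm.orbit_closure_pair_eq_of_eqOn (Set.finite_Icc _ _) hrot' hrot' hrot hrot hM]
  exact Iff.rfl

lemma gammaOrbit_top_of_pair :
    gammaOrbit m (2 * (k + 1)) = {2 * (k + 1) - 1, 2 * (k + 1)} := by
  have he1 := triv_f_sub_one (k := k + 1) (by omega)
  have he2 := triv_f_two_mul (k := k + 1) (by omega)
  have hm2 : m.f (2 * (k + 1)) = 2 * (k + 1) - 1 := m.involutive.eq_iff.mpr h.symm
  apply subset_antisymm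
  · refine Equiv.Perm.orbit_closure_subset (Set.toFinite _) ?_ (Or.inr rfl)
    rintro _ (rfl | rfl) x (rfl | rfl) <;> simp [he1, he2, h, hm2]
  · refine Set.insert_subset ?_ (Set.singleton_subset_iff.mpr (m.mem_gammaOrbit_self _))
    rw [← he2]; exact m.triv_f_mem_gammaOrbit _

lemma cycleCount_of_pair (ℓ : ℕ) :
    cycleCount m ℓ = cycleCount (down m) ℓ + if ℓ = 1 then 1 else 0 := by
  have hP : ∀ x ∈ ({2 * (k + 1) - 1, 2 * (k + 1)} : Finset ℕ), (gammaOrbit m x).ncard = 2 := by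
    intro x hx
    have hx' : x ∈ gammaOrbit m (2 * (k + 1)) := by
      rw [gammaOrbit_top_of_pair h]; simpa using hx
    rw [gammaOrbit_eq_of_mem hx', gammaOrbit_top_of_pair h, Set.ncard_pair (by omega)]
  have hI : ((Finset.Icc 1 (2 * k)).filter fun a => (gammaOrbit m a).ncard = 2 * ℓ) =
      (Finset.Icc 1 (2 * k)).filter fun a => (gammaOrbit (down m) a).ncard = 2 * ℓ :=
    Finset.filter_congr fun x hx => by rw [gammaOrbit_down h (by simpa using hx)]
  unfold cycleCount
  rw [card_filter_gammaOrbit_succ, hI, Finset.card_filter_eq_ite_of_forall hP,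
    Finset.card_pair (by omega)]
  split_ifs with hℓ h2ℓ h2ℓ
  · rw [← hℓ, Nat.add_div_right _ (by omega)]; rfl
  · omega
  · omega
  · rfl

lemma hasCosetType_cons_one_iff (ν : Multiset ℕ) :
    HasCosetType m (1 ::ₘ ν) ↔ HasCosetType (down m) ν := by
  refine forall₂_congr fun ℓ _ => ?_
  rw [Multiset.count_cons, cycleCount_of_pair h]
  split_ifs <;> omega

lemma one_mem_of_hasCosetType {μ : Multiset ℕ} (hμ : HasCosetType m μ) : 1 ∈ μ :=
  Multiset.count_pos.mp (by rw [hμ 1 le_rfl, cycleCount_of_pair h, if_pos rfl]; omega)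

lemma exists_partition_iff_of_pair (r : ℕ) :
    (∃ p : (k + 1).Partition, p.parts.card + r = k + 1 ∧ HasCosetType m p.parts) ↔
      ∃ q : k.Partition, q.parts.card + r = k ∧ HasCosetType (down m) q.parts := by
  refine (Nat.Partition.exists_iff_exists_cons (P := fun μ => μ.card + r = k + 1 ∧
    HasCosetType m μ) rfl le_rfl fun μ hμ => one_mem_of_hasCosetType h hμ.2).trans
      (exists_congr fun q => ?_)
  rw [Multiset.card_cons, hasCosetType_cons_one_iff h]
  exact and_congr_left fun _ => ⟨fun h => by omega, fun h => by omega⟩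

end Down

/-- `((a 2k+1)·𝔪)↓` for `a = 𝔪(2k+2)`: the cycle of `Γ(𝔪)` through `2k+1, 2k+2` loses these two
vertices, its edges `{a, 2k+2}`, `{2k+1, 𝔪(2k+1)}` being replaced by `{a, 𝔪(2k+1)}`. -/
def mergeDown (m : PairPartition (k + 1)) : PairPartition k :=
  down (swapAct (m.f (2 * (k + 1))) (2 * (k + 1) - 1) m)

lemma top_sub_one_f_ne (m : PairPartition (k + 1)) :
    m.f (2 * (k + 1) - 1) ≠ m.f (2 * (k + 1)) :=
  fun h => absurd (m.involutive.injective h) (by omega)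

section Merge

variable {m : PairPartition (k + 1)} (hA : m.f (2 * (k + 1)) ≤ 2 * k)
include hA

lemma top_f_mem_Icc : m.f (2 * (k + 1)) ∈ Set.Icc 1 (2 * k) :=
  ⟨(m.f_mem_Icc ⟨by omega, le_rfl⟩).1, hA⟩

lemma top_sub_one_f_mem_Icc : m.f (2 * (k + 1) - 1) ∈ Set.Icc 1 (2 * k) := by
  obtain ⟨h1, h2⟩ := m.f_mem_Icc (a := 2 * (k + 1) - 1) ⟨by omega, by omega⟩
  have h3 := m.f_ne (a := 2 * (k + 1) - 1) ⟨by omega, by omega⟩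
  have h4 : m.f (2 * (k + 1) - 1) ≠ 2 * (k + 1) := fun h => by
    rw [m.involutive.eq_iff] at h; omega
  exact ⟨h1, by omega⟩

lemma mergeDown_f_apply {x : ℕ} (hx : x ≤ 2 * k) :
    (mergeDown m).f x = Equiv.swap (m.f (2 * (k + 1))) (2 * (k + 1) - 1)
      (m.f (Equiv.swap (m.f (2 * (k + 1))) (2 * (k + 1) - 1) x)) := by
  have hS := swapAct_f_apply (m := m) (Set.Icc_subset_Icc_right (by omega) (top_f_mem_Icc hA))
    (j := 2 * (k + 1) - 1) ⟨by omega, by omega⟩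
  have hpair : (swapAct (m.f (2 * (k + 1))) (2 * (k + 1) - 1) m).f (2 * (k + 1) - 1) =
      2 * (k + 1) := by
    rw [hS, Equiv.swap_apply_right, m.invol, Equiv.swap_apply_of_ne_of_ne (by omega) (by omega)]
  rw [mergeDown, down_f_of_le hpair hx, hS]

lemma mergeDown_f_of_ne {x : ℕ} (hx : x ≤ 2 * k) (hxa : x ≠ m.f (2 * (k + 1)))
    (hxc : x ≠ m.f (2 * (k + 1) - 1)) : (mergeDown m).f x = m.f x := by
  have hfa : m.f x ≠ m.f (2 * (k + 1)) := fun h => by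
    have := m.involutive.injective h; omega
  have hfc : m.f x ≠ 2 * (k + 1) - 1 := fun h => hxc (by rw [← h, m.invol])
  rw [mergeDown_f_apply hA hx, Equiv.swap_apply_of_ne_of_ne hxa (by omega),
    Equiv.swap_apply_of_ne_of_ne hfa hfc]

lemma mergeDown_f_top_f : (mergeDown m).f (m.f (2 * (k + 1))) = m.f (2 * (k + 1) - 1) := by
  rw [mergeDown_f_apply hA hA, Equiv.swap_apply_left,
    Equiv.swap_apply_of_ne_of_ne m.top_sub_one_f_ne
      (by have := (top_sub_one_f_mem_Icc hA).2; omega)]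

lemma mergeDown_f_top_sub_one_f :
    (mergeDown m).f (m.f (2 * (k + 1) - 1)) = m.f (2 * (k + 1)) := by
  have hc := (top_sub_one_f_mem_Icc hA).2
  rw [mergeDown_f_apply hA hc, Equiv.swap_apply_of_ne_of_ne m.top_sub_one_f_ne (by omega),
    m.invol, Equiv.swap_apply_right]

lemma mergeDown_f_mem_gammaOrbit {y : ℕ} (hy : y ≤ 2 * k) :
    (mergeDown m).f y ∈ gammaOrbit m y := by
  by_cases hya : y = m.f (2 * (k + 1))
  · subst hya
    convert m.f_triv_f_f_mem_gammaOrbit (m.f (2 * (k + 1))) using 1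
    rw [mergeDown_f_top_f hA, m.invol, triv_f_two_mul (by omega)]
  by_cases hyc : y = m.f (2 * (k + 1) - 1)
  · subst hyc
    convert m.f_triv_f_f_mem_gammaOrbit (m.f (2 * (k + 1) - 1)) using 1
    rw [mergeDown_f_top_sub_one_f hA, m.invol, triv_f_sub_one (by omega)]
  rw [mergeDown_f_of_ne hA hy hya hyc]
  exact m.f_mem_gammaOrbit y

lemma gammaOrbit_mergeDown_subset :
    gammaOrbit (mergeDown m) (m.f (2 * (k + 1))) ⊆ gammaOrbit m (2 * (k + 1)) := by
  refine subset_trans (Equiv.Perm.orbit_closure_subset (A := gammaOrbit m (2 * (k + 1)) ∩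
    Set.Icc 1 (2 * k)) ((Set.finite_Icc _ _).inter_of_right _) ?_
      ⟨m.f_mem_gammaOrbit _, top_f_mem_Icc hA⟩) Set.inter_subset_left
  rintro _ (rfl | rfl) y ⟨hyΓ, hy⟩ <;> simp only [perm_apply]
  · refine ⟨?_, (triv k).f_mem_Icc hy⟩
    rw [← triv_succ_f hy.2]
    exact m.mapsTo_triv_gammaOrbit _ hyΓ
  · refine ⟨?_, (mergeDown m).f_mem_Icc hy⟩
    rw [← gammaOrbit_eq_of_mem hyΓ]
    exact mergeDown_f_mem_gammaOrbit hA hy.2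

lemma gammaOrbit_top_of_merge :
    gammaOrbit m (2 * (k + 1)) =
      gammaOrbit (mergeDown m) (m.f (2 * (k + 1))) ∪ {2 * (k + 1) - 1, 2 * (k + 1)} := by
  set O := gammaOrbit (mergeDown m) (m.f (2 * (k + 1)))
  have hO : O ⊆ Set.Icc 1 (2 * k) := (mergeDown m).gammaOrbit_subset (top_f_mem_Icc hA)
  have haO : m.f (2 * (k + 1)) ∈ O := mem_gammaOrbit_self _ _
  have hcO : m.f (2 * (k + 1) - 1) ∈ O := by
    rw [← mergeDown_f_top_f hA]; exact f_mem_gammaOrbit _ _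
  have he1 := triv_f_sub_one (k := k + 1) (by omega)
  have he2 := triv_f_two_mul (k := k + 1) (by omega)
  refine subset_antisymm ?_ (Set.union_subset (gammaOrbit_mergeDown_subset hA)
    (Set.insert_subset ?_ (Set.singleton_subset_iff.mpr (m.mem_gammaOrbit_self _))))
  · refine Equiv.Perm.orbit_closure_subset (((Set.finite_Icc _ _).subset hO).union
      (Set.toFinite _)) ?_ (Or.inr (Or.inr rfl))
    rintro _ (rfl | rfl) x (hx | rfl | rfl) <;> simp only [perm_apply]
    · rw [triv_succ_f (hO hx).2]
      exact Or.inl ((mergeDown m).mapsTo_triv_gammaOrbit _ hx)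
    · rw [he1]; exact Or.inr (Or.inr rfl)
    · rw [he2]; exact Or.inr (Or.inl rfl)
    · by_cases hxa : x = m.f (2 * (k + 1))
      · rw [hxa, m.invol]; exact Or.inr (Or.inr rfl)
      by_cases hxc : x = m.f (2 * (k + 1) - 1)
      · rw [hxc, m.invol]; exact Or.inr (Or.inl rfl)
      rw [← mergeDown_f_of_ne hA (hO hx).2 hxa hxc]
      exact Or.inl ((mergeDown m).mapsTo_gammaOrbit _ hx)
    · exact Or.inl hcO
    · exact Or.inl haO
  · rw [← he2]; exact m.triv_f_mem_gammaOrbit _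

lemma gammaOrbit_of_merge {x : ℕ} (hx : x ∈ Set.Icc 1 (2 * k))
    (hxO : x ∉ gammaOrbit (mergeDown m) (m.f (2 * (k + 1)))) :
    gammaOrbit m x = gammaOrbit (mergeDown m) x := by
  set O := gammaOrbit (mergeDown m) (m.f (2 * (k + 1)))
  have hmaps : ∀ g : PairPartition k, Set.MapsTo g.f O O →
      Set.MapsTo g.perm (Set.Icc 1 (2 * k) \ O) (Set.Icc 1 (2 * k) \ O) :=
    fun g hg y hy => ⟨g.f_mem_Icc hy.1, fun h => hy.2 (g.invol y ▸ hg h)⟩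
  refine Equiv.Perm.orbit_closure_pair_eq_of_eqOn (Set.finite_Icc _ _).sdiff
    (hmaps _ ((mergeDown m).mapsTo_triv_gammaOrbit _)) (hmaps _ ((mergeDown m).mapsTo_gammaOrbit _))
    (fun y hy => triv_succ_f hy.1.2) (fun y hy => ?_) ⟨hx, hxO⟩
  refine (mergeDown_f_of_ne hA hy.1.2 (fun h => hy.2 ?_) (fun h => hy.2 ?_)).symm
  · exact h ▸ mem_gammaOrbit_self _ _
  · rw [h, ← mergeDown_f_top_f hA]; exact f_mem_gammaOrbit _ _

lemma ncard_gammaOrbit_top_of_merge :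
    (gammaOrbit m (2 * (k + 1))).ncard =
      (gammaOrbit (mergeDown m) (m.f (2 * (k + 1)))).ncard + 2 := by
  have hO := (mergeDown m).gammaOrbit_subset (top_f_mem_Icc hA)
  have hdisj : Disjoint (gammaOrbit (mergeDown m) (m.f (2 * (k + 1))))
      {2 * (k + 1) - 1, 2 * (k + 1)} := by
    refine Set.disjoint_left.mpr fun x hx hx' => ?_
    have := (hO hx).2
    rcases hx' with rfl | rfl <;> omega
  rw [gammaOrbit_top_of_merge hA, Set.ncard_union_eq hdisj ((Set.finite_Icc _ _).subset hO)
    (Set.toFinite _), Set.ncard_pair (by omega)]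

lemma two_le_ncard_gammaOrbit_mergeDown :
    2 ≤ (gammaOrbit (mergeDown m) (m.f (2 * (k + 1)))).ncard := by
  have hsub : {m.f (2 * (k + 1)), m.f (2 * (k + 1) - 1)} ⊆
      gammaOrbit (mergeDown m) (m.f (2 * (k + 1))) := by
    refine Set.insert_subset (mem_gammaOrbit_self _ _) (Set.singleton_subset_iff.mpr ?_)
    rw [← mergeDown_f_top_f hA]; exact f_mem_gammaOrbit _ _
  exact (Set.ncard_pair m.top_sub_one_f_ne.symm).symm.trans_le (Set.ncard_le_ncard hsub
    ((Set.finite_Icc _ _).subset ((mergeDown m).gammaOrbit_subset (top_f_mem_Icc hA))))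

lemma card_filter_gammaOrbit_of_merge (n : ℕ) :
    ((Finset.Icc 1 (2 * (k + 1))).filter fun a => (gammaOrbit m a).ncard = n).card +
        (if (gammaOrbit (mergeDown m) (m.f (2 * (k + 1)))).ncard = n
          then (gammaOrbit (mergeDown m) (m.f (2 * (k + 1)))).ncard else 0) =
      ((Finset.Icc 1 (2 * k)).filter fun a => (gammaOrbit (mergeDown m) a).ncard = n).card +
        (if (gammaOrbit (mergeDown m) (m.f (2 * (k + 1)))).ncard + 2 = n
          then (gammaOrbit (mergeDown m) (m.f (2 * (k + 1)))).ncard + 2 else 0) := by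
  set O := gammaOrbit (mergeDown m) (m.f (2 * (k + 1)))
  have hOfin : O.Finite :=
    (Set.finite_Icc _ _).subset ((mergeDown m).gammaOrbit_subset (top_f_mem_Icc hA))
  set Of := hOfin.toFinset
  have hOsub : Of ⊆ Finset.Icc 1 (2 * k) := fun x hx => by
    simpa using (mergeDown m).gammaOrbit_subset (top_f_mem_Icc hA) (hOfin.mem_toFinset.mp hx)
  have htop : ∀ x ∈ gammaOrbit m (2 * (k + 1)), (gammaOrbit m x).ncard = O.ncard + 2 :=
    fun x hx => by rw [gammaOrbit_eq_of_mem hx, ncard_gammaOrbit_top_of_merge hA]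
  have hmO : ∀ x ∈ Of, (gammaOrbit m x).ncard = O.ncard + 2 := fun x hx => htop x (by
    rw [gammaOrbit_top_of_merge hA]; exact Or.inl (hOfin.mem_toFinset.mp hx))
  have hmP : ∀ x ∈ ({2 * (k + 1) - 1, 2 * (k + 1)} : Finset ℕ),
      (gammaOrbit m x).ncard = O.ncard + 2 := fun x hx => htop x (by
    rw [gammaOrbit_top_of_merge hA]; exact Or.inr (by simpa using hx))
  have hm'O : ∀ x ∈ Of, (gammaOrbit (mergeDown m) x).ncard = O.ncard :=
    fun x hx => by rw [gammaOrbit_eq_of_mem (hOfin.mem_toFinset.mp hx)]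
  have hrest : ((Finset.Icc 1 (2 * k) \ Of).filter fun a => (gammaOrbit m a).ncard = n) =
      (Finset.Icc 1 (2 * k) \ Of).filter fun a => (gammaOrbit (mergeDown m) a).ncard = n :=
    Finset.filter_congr fun x hx => by
      obtain ⟨hx, hxO⟩ := Finset.mem_sdiff.mp hx
      rw [gammaOrbit_of_merge hA (by simpa using hx) (by simpa [Of] using hxO)]
  have hcard : Of.card = O.ncard := (Set.ncard_eq_toFinset_card _ hOfin).symm
  rw [card_filter_gammaOrbit_succ, ← Finset.union_sdiff_of_subset hOsub, Finset.filter_union,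
    Finset.filter_union, Finset.card_union_of_disjoint
      (Finset.disjoint_filter_filter Finset.disjoint_sdiff),
    Finset.card_union_of_disjoint (Finset.disjoint_filter_filter Finset.disjoint_sdiff), hrest,
    Finset.card_filter_eq_ite_of_forall hmO, Finset.card_filter_eq_ite_of_forall hm'O,
    Finset.card_filter_eq_ite_of_forall hmP, Finset.card_pair (by omega), hcard]
  split_ifs <;> omega

variable {ℓ₀ : ℕ} (hd : (gammaOrbit (mergeDown m) (m.f (2 * (k + 1)))).ncard = 2 * ℓ₀)
include hd

lemma cycleCount_of_merge (ℓ : ℕ) :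
    cycleCount m ℓ + (if ℓ = ℓ₀ then 1 else 0) =
      cycleCount (mergeDown m) ℓ + if ℓ = ℓ₀ + 1 then 1 else 0 := by
  have hℓ₀ : 1 ≤ ℓ₀ := by have := two_le_ncard_gammaOrbit_mergeDown hA; omega
  have hcount := card_filter_gammaOrbit_of_merge hA (2 * ℓ)
  rw [hd] at hcount
  unfold cycleCount
  by_cases h₀ : ℓ = ℓ₀
  · subst h₀
    rw [if_pos rfl, if_neg (by omega), add_zero] at hcount
    rw [if_pos rfl, if_neg (by omega), add_zero, ← hcount, Nat.add_div_right _ (by omega)]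
  by_cases h₁ : ℓ = ℓ₀ + 1
  · subst h₁
    rw [if_neg (by omega), if_pos (by omega), add_zero] at hcount
    rw [if_neg h₀, if_pos rfl, add_zero, hcount, show 2 * ℓ₀ + 2 = 2 * (ℓ₀ + 1) by ring,
      Nat.add_div_right _ (by omega)]
  · rw [if_neg (by omega), if_neg (by omega), add_zero, add_zero] at hcount
    rw [if_neg h₀, if_neg h₁, hcount]

lemma hasCosetType_cons_iff_of_merge (ν : Multiset ℕ) :
    HasCosetType m ((ℓ₀ + 1) ::ₘ ν) ↔ HasCosetType (mergeDown m) (ℓ₀ ::ₘ ν) := by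
  refine forall₂_congr fun ℓ _ => ?_
  have := cycleCount_of_merge hA hd ℓ
  rw [Multiset.count_cons, Multiset.count_cons]
  split_ifs at this ⊢ <;> omega

lemma exists_partition_iff_of_merge (Q : ℕ → Prop) :
    (∃ p : (k + 1).Partition, Q p.parts.card ∧ HasCosetType m p.parts) ↔
      ∃ q : k.Partition, Q q.parts.card ∧ HasCosetType (mergeDown m) q.parts := by
  have hℓ₀ : 1 ≤ ℓ₀ := by have := two_le_ncard_gammaOrbit_mergeDown hA; omega
  have hℓ₀k : ℓ₀ ≤ k := by
    have := Set.ncard_le_ncard ((mergeDown m).gammaOrbit_subset (top_f_mem_Icc hA))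
      (Set.finite_Icc _ _)
    rw [Set.ncard_Icc_nat] at this
    omega
  refine (Nat.Partition.exists_iff_exists_cons (n := k - ℓ₀) (a := ℓ₀ + 1)
      (P := fun μ => Q μ.card ∧ HasCosetType m μ) (by omega) (by omega)
      fun μ hμ => Multiset.count_pos.mp ?_).trans <| (exists_congr fun ν => ?_).trans
    (Nat.Partition.exists_iff_exists_cons (n := k - ℓ₀) (a := ℓ₀)
      (P := fun μ => Q μ.card ∧ HasCosetType (mergeDown m) μ) (by omega) hℓ₀
      fun μ hμ => Multiset.count_pos.mp ?_).symm
  · have := cycleCount_of_merge hA hd (ℓ₀ + 1)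
    rw [hμ.2 (ℓ₀ + 1) (by omega)]; simp at this; omega
  · rw [Multiset.card_cons, Multiset.card_cons, hasCosetType_cons_iff_of_merge hA hd]
  · have := cycleCount_of_merge hA hd ℓ₀
    rw [hμ.2 ℓ₀ hℓ₀]; simp at this; omega

end Merge

section Lift

variable {R : Type*} [CommRing R] (b : R)

/-- `v` is the image of `w` under the embedding `𝒫_k → 𝒫_{k+1}` that adjoins the pair
`{2k+1, 2k+2}`. -/
def IsLift (v : PairPartition (k + 1) → R) (w : PairPartition k → R) : Prop :=
  ∀ m, v m = if m.f (2 * (k + 1) - 1) = 2 * (k + 1) then w (down m) else 0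

lemma isLift_basisVec :
    IsLift (basisVec (k + 1) (triv (k + 1)) : PairPartition (k + 1) → R)
      (basisVec k (triv k)) := by
  intro m
  simp only [basisVec, eq_triv_succ_iff]
  split_ifs <;> tauto

lemma IsLift.sum {ι : Type*} (s : Finset ι) {v : ι → PairPartition (k + 1) → R}
    {w : ι → PairPartition k → R} (h : ∀ i ∈ s, IsLift (v i) (w i)) :
    IsLift (∑ i ∈ s, v i) (∑ i ∈ s, w i) := by
  intro m
  simp only [Finset.sum_apply]
  rw [Finset.sum_congr rfl fun i hi => h i hi m]
  split_ifs <;> simp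

variable {v : PairPartition (k + 1) → R} {w : PairPartition k → R}

lemma IsLift.jbOp {i : ℕ} (hi : 1 ≤ i) (hik : i ≤ k) (hvw : IsLift v w) :
    IsLift (JbOp b i v) (JbOp b i w) := by
  intro m
  have hj : 2 * i - 1 ∈ Set.Icc 1 (2 * k) := ⟨by omega, by omega⟩
  simp only [JbOp]
  split_ifs with h
  · refine Finset.sum_congr rfl fun a ha => ?_
    have ha : a ∈ Set.Icc 1 (2 * k) := by simp only [Finset.mem_Icc] at ha; exact ⟨ha.1, by omega⟩
    rw [hvw, if_pos ((swapAct_f_top_sub_one ha hj).mpr h), down_swapAct h ha hj, omegab, omegab,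
      charge_down h ha, charge_down h hj]
  · refine Finset.sum_eq_zero fun a ha => ?_
    have ha : a ∈ Set.Icc 1 (2 * k) := by simp only [Finset.mem_Icc] at ha; exact ⟨ha.1, by omega⟩
    rw [hvw, if_neg (mt (swapAct_f_top_sub_one ha hj).mp h), mul_zero]

lemma IsLift.jbOp_top_apply (hvw : IsLift v w) (m : PairPartition (k + 1)) :
    JbOp b (k + 1) v m = if m.f (2 * (k + 1)) ≤ 2 * k then w (mergeDown m) else 0 := by
  have key : ∀ a ∈ Finset.Icc 1 (2 * (k + 1) - 2), omegab b m a (2 * (k + 1) - 1) *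
      v (swapAct a (2 * (k + 1) - 1) m) =
        if m.f (2 * (k + 1)) = a then omegab b m a (2 * (k + 1) - 1) * w (mergeDown m) else 0 := by
    intro a ha
    simp only [Finset.mem_Icc] at ha
    have hpair : (swapAct a (2 * (k + 1) - 1) m).f (2 * (k + 1) - 1) = 2 * (k + 1) ↔
        m.f (2 * (k + 1)) = a := by
      rw [swapAct_f_apply ⟨ha.1, by omega⟩ ⟨by omega, by omega⟩, Equiv.swap_apply_right,
        Equiv.swap_apply_eq_iff, Equiv.swap_apply_of_ne_of_ne (by omega) (by omega),
        m.involutive.eq_iff, eq_comm]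
    rw [hvw, if_congr hpair rfl rfl]
    split_ifs with hA
    · rw [mergeDown, hA]
    · rw [mul_zero]
  rw [JbOp, Finset.sum_congr rfl key, Finset.sum_ite_eq]
  refine if_congr ?_ ?_ rfl
  · have := (m.f_mem_Icc (a := 2 * (k + 1)) ⟨by omega, le_rfl⟩).1
    simp only [Finset.mem_Icc]; omega
  · have h1 := omegab_f_triv_f b m (2 * (k + 1) - 1)
    rw [triv_f_sub_one (by omega)] at h1
    rw [h1, one_mul]

/-- `𝒥_{i_1} ⋯ 𝒥_{i_r} v` for `s = {i_1 > ⋯ > i_r}`. -/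
noncomputable def jbProd (s : Finset ℕ) (v : PairPartition k → R) : PairPartition k → R :=
  (s.sort (· ≤ ·)).foldl (fun v i => JbOp b i v) v

/-- `e_r(𝒥_1, …, 𝒥_k) 𝔢_k`. -/
noncomputable def esymmJb (k r : ℕ) : PairPartition k → R :=
  ∑ s ∈ Finset.powersetCard r (Finset.Icc 1 k), jbProd b s (basisVec k (triv k))

lemma IsLift.jbProd {s : Finset ℕ} (hs : s ⊆ Finset.Icc 1 k) (hvw : IsLift v w) :
    IsLift (jbProd b s v) (jbProd b s w) := by
  have hl : ∀ i ∈ s.sort (· ≤ ·), 1 ≤ i ∧ i ≤ k := fun i hi => by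
    simpa using hs ((Finset.mem_sort _).mp hi)
  unfold PairPartition.jbProd
  generalize s.sort (· ≤ ·) = l at hl ⊢
  induction l generalizing v w with
  | nil => exact hvw
  | cons i l ih =>
    have hi := hl i List.mem_cons_self
    exact ih (hvw.jbOp b hi.1 hi.2) fun j hj => hl j (List.mem_cons_of_mem i hj)

lemma jbProd_insert_top {s : Finset ℕ} (hs : s ⊆ Finset.Icc 1 k) (v : PairPartition (k + 1) → R) :
    jbProd b (insert (k + 1) s) v = JbOp b (k + 1) (jbProd b s v) := by
  rw [jbProd, Finset.sort_insert_of_forall_lt fun x hx => by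
    have := Finset.mem_Icc.mp (hs hx); omega, List.foldl_append]
  rfl

lemma esymmJb_succ (r : ℕ) :
    esymmJb b (k + 1) (r + 1) =
      ∑ s ∈ Finset.powersetCard (r + 1) (Finset.Icc 1 k),
        jbProd b s (basisVec (k + 1) (triv (k + 1)) : PairPartition (k + 1) → R) +
      ∑ s ∈ Finset.powersetCard r (Finset.Icc 1 k),
        JbOp b (k + 1) (jbProd b s (basisVec (k + 1) (triv (k + 1)))) := by
  have hnot : k + 1 ∉ Finset.Icc 1 k := by simp
  have hsub : ∀ s ∈ Finset.powersetCard r (Finset.Icc 1 k), s ⊆ Finset.Icc 1 k :=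
    fun s hs => (Finset.mem_powersetCard.mp hs).1
  have hdisj : Disjoint (Finset.powersetCard (r + 1) (Finset.Icc 1 k))
      ((Finset.powersetCard r (Finset.Icc 1 k)).image (insert (k + 1))) := by
    refine Finset.disjoint_right.mpr fun s hs hs' => ?_
    obtain ⟨t, -, rfl⟩ := Finset.mem_image.mp hs
    exact hnot ((Finset.mem_powersetCard.mp hs').1 (Finset.mem_insert_self _ _))
  have hinj : Set.InjOn (insert (k + 1))
      (Finset.powersetCard r (Finset.Icc 1 k) : Set (Finset ℕ)) := by
    intro s hs t ht hst
    rw [← Finset.erase_insert fun h => hnot (hsub s (Finset.mem_coe.mp hs) h),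
      ← Finset.erase_insert fun h => hnot (hsub t (Finset.mem_coe.mp ht) h), hst]
  rw [esymmJb, show Finset.Icc 1 (k + 1) = insert (k + 1) (Finset.Icc 1 k) by
      ext; simp only [Finset.mem_Icc, Finset.mem_insert]; omega,
    Finset.powersetCard_succ_insert hnot, Finset.sum_union hdisj, Finset.sum_image hinj]
  exact congrArg _ (Finset.sum_congr rfl fun s hs => jbProd_insert_top b (hsub s hs) _)

lemma esymmJb_succ_zero_apply (m : PairPartition (k + 1)) :
    esymmJb b (k + 1) 0 m =
      if m.f (2 * (k + 1) - 1) = 2 * (k + 1) then esymmJb b k 0 (down m) else 0 := by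
  simp only [esymmJb, Finset.powersetCard_zero, Finset.sum_singleton]
  exact isLift_basisVec.jbProd b (Finset.empty_subset _) m

lemma esymmJb_succ_succ_apply (r : ℕ) (m : PairPartition (k + 1)) :
    esymmJb b (k + 1) (r + 1) m =
      (if m.f (2 * (k + 1) - 1) = 2 * (k + 1) then esymmJb b k (r + 1) (down m) else 0) +
        if m.f (2 * (k + 1)) ≤ 2 * k then esymmJb b k r (mergeDown m) else 0 := by
  have hlift : ∀ r, ∀ s ∈ Finset.powersetCard r (Finset.Icc 1 k),
      IsLift (jbProd b s (basisVec (k + 1) (triv (k + 1)))) (jbProd b s (basisVec k (triv k))) :=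
    fun r s hs => isLift_basisVec.jbProd b (Finset.mem_powersetCard.mp hs).1
  rw [esymmJb_succ, Pi.add_apply, IsLift.sum _ (hlift (r + 1)) m, Finset.sum_apply m,
    Finset.sum_congr rfl fun s hs => (hlift r s hs).jbOp_top_apply b m]
  congr 1
  split_ifs
  · simp only [esymmJb, Finset.sum_apply]
  · simp

lemma esymmJb_zero_left_apply (r : ℕ) (m : PairPartition 0) :
    esymmJb b 0 r m =
      if ∃ p : Nat.Partition 0, p.parts.card + r = 0 ∧ HasCosetType m p.parts then 1 else 0 := by
  cases r with
  | zero =>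
    have hm : m = triv 0 :=
      ext' (funext fun x => (m.f_eq_self (by simp)).trans ((triv 0).f_eq_self (by simp)).symm)
    have hct : HasCosetType m 0 := fun ℓ _ => by simp [cycleCount]
    simp only [esymmJb, jbProd, Finset.powersetCard_zero, Finset.sum_singleton,
      Finset.sort_empty, List.foldl_nil]
    rw [if_pos ⟨⟨0, fun h => absurd h (Multiset.notMem_zero _), rfl⟩, rfl, hct⟩]
    exact if_pos hm
  | succ r =>
    rw [esymmJb, Finset.powersetCard_eq_empty.mpr (by simp), Finset.sum_empty, if_neg (by simp)]
    rfl

theorem esymmJb_apply (k r : ℕ) (m : PairPartition k) :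
    esymmJb b k r m =
      if ∃ p : k.Partition, p.parts.card + r = k ∧ HasCosetType m p.parts then 1 else 0 := by
  induction k generalizing r with
  | zero => exact esymmJb_zero_left_apply b r m
  | succ k ih =>
    by_cases h : m.f (2 * (k + 1) - 1) = 2 * (k + 1)
    · have hA : ¬ m.f (2 * (k + 1)) ≤ 2 * k := fun hA => not_pair_iff.mpr hA h
      have hex := exists_partition_iff_of_pair h r
      cases r with
      | zero => rw [esymmJb_succ_zero_apply, if_pos h, ih, if_congr hex.symm rfl rfl]
      | succ r =>
        rw [esymmJb_succ_succ_apply, if_pos h, if_neg hA, add_zero, ih, if_congr hex.symm rfl rfl]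
    · have hA := not_pair_iff.mp h
      obtain ⟨ℓ₀, hd⟩ := (m.mergeDown.even_ncard_gammaOrbit (top_f_mem_Icc hA)).two_dvd
      cases r with
      | zero =>
        rw [esymmJb_succ_zero_apply, if_neg h, if_neg]
        rintro hex
        obtain ⟨q, hq, -⟩ := (exists_partition_iff_of_merge hA hd (· + 0 = k + 1)).mp hex
        have := q.card_parts_le
        omega
      | succ r =>
        rw [esymmJb_succ_succ_apply, if_neg h, if_pos hA, zero_add, ih]
        refine if_congr ((exists_congr fun q => and_congr_left fun _ => ?_).trans
          (exists_partition_iff_of_merge hA hd (· + (r + 1) = k + 1)).symm) rfl rfl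
        omega

end Lift

end PairPartition

theorem elementary_symmetric_bJucysMurphy_general
    (k r : ℕ) (hr : r ≤ k) :
    ∑ s ∈ Finset.powersetCard r (Finset.Icc 1 k),
      (s.sort (· ≤ ·)).foldl
        (fun v i => JbOp (Polynomial.X : Polynomial ℤ) i v)
        (basisVec k (triv k))
    = ∑ p ∈ Finset.univ.filter (fun p : Nat.Partition k => p.parts.card = k - r),
        (pVec k p.parts : PairPartition k → Polynomial ℤ) := by
  funext m
  rw [sum_pVec_apply]
  refine (esymmJb_apply Polynomial.X k r m).trans (if_congr ?_ rfl rfl)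
  exact exists_congr fun p => and_congr_left fun _ => by omega

/-- **Elementary symmetric functions of the `b`-deformed Jucys–Murphy operators**
(Proposition 4.24, first part).  Let `k ≥ 1` and `0 ≤ r ≤ k`.  In the free
`ℤ[b]`-module with basis `𝒫_k`,
`∑_{k ≥ i₁ > ⋯ > i_r ≥ 1} 𝒥_{i₁} ⋯ 𝒥_{i_r} (𝔢_k) = ∑_{λ ⊢ k, ℓ(λ) = k-r} 𝔭_λ`
(the sum on the left being over `r`-element subsets of `{1, …, k}`, the operators
applied in decreasing order of index). -/
theorem elementary_symmetric_bJucysMurphy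
    (k r : ℕ) (hk : 1 ≤ k) (hr : r ≤ k) :
    ∑ s ∈ Finset.powersetCard r (Finset.Icc 1 k),
      (s.sort (· ≤ ·)).foldl
        (fun v i => JbOp (Polynomial.X : Polynomial ℤ) i v)
        (basisVec k (triv k))
    = ∑ p ∈ Finset.univ.filter (fun p : Nat.Partition k => p.parts.card = k - r),
        (pVec k p.parts : PairPartition k → Polynomial ℤ) :=
  elementary_symmetric_bJucysMurphy_general k r hr
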